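/- arXiv:2605.20609 — 3 statements merged into one kernel-verified Lean document; each statement's English description precedes it below -/
import Mathlib

section
/- (Endogenous Bellman closure, finite-state version.) Let Z be a finite type and f : S → Z a map. Assume the reward factors through f, i.e., there is r₀ : Z → ℝ with 0 ≤ r₀ z ≤ 1 and r s = r₀ (f s) for all s, and assume the pushforward of the transition kernel along f depends only on the latent state and the action: for all s₁, s₂ ∈ S with f s₁ = f s₂, all a ∈ A and all z ∈ Z, ∑_{s' : f s' = z} P s₁ a s' = ∑_{s' : f s' = z} P s₂ a s'. Then the unique fixed point V* of the absorbing-goal Bellman optimality operator T factors through f: for all s₁, s₂ ∈ S, f s₁ = f s₂ implies V* s₁ = V* s₂; equivalently, there exists W : Z → ℝ with V* = W ∘ f. -/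
/-!
The Bellman operator `T` is a `γ`-contraction of `S → ℝ` in the sup norm, since a maximum of
expectations under probability vectors is `1`-Lipschitz. It maps the closed set of functions
factoring through `f` into itself: for `U = W ∘ f`, the expectation `∑ s', P s a s' * U s'`
only sees the pushforward of `P s a` along `f`, and so does the reward. Iterating `T` from `0`
therefore converges inside that set, and the limit is the unique fixed point `V*`.
-/

open Finset Function Filter

theorem ContractingWith.mem_of_isFixedPt {α : Type*} [MetricSpace α] [CompleteSpace α]
    {K : NNReal} {f : α → α} (hf : ContractingWith K f) {s : Set α} (hs : IsClosed s)
    (hsf : Set.MapsTo f s s) {y : α} (hy : y ∈ s) {x : α} (hx : IsFixedPt f x) : x ∈ s := by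
  have : Nonempty α := ⟨y⟩
  rw [hf.fixedPoint_unique hx]
  exact hs.mem_of_tendsto (hf.tendsto_iterate_fixedPoint y)
    (Eventually.of_forall fun n => hsf.iterate n hy)

theorem Finset.abs_sup'_sub_sup'_le {ι : Type*} {s : Finset ι} (hs : s.Nonempty)
    {u v : ι → ℝ} {c : ℝ} (h : ∀ a ∈ s, |u a - v a| ≤ c) :
    |s.sup' hs u - s.sup' hs v| ≤ c := by
  rw [abs_sub_le_iff, sub_le_iff_le_add, sub_le_iff_le_add]
  constructor
  · refine sup'_le _ _ fun a ha => ?_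
    linarith [(abs_sub_le_iff.mp (h a ha)).1, le_sup' v ha]
  · refine sup'_le _ _ fun a ha => ?_
    linarith [(abs_sub_le_iff.mp (h a ha)).2, le_sup' u ha]

theorem Finset.sum_mul_comp_eq_sum_image {ι κ R : Type*} [DecidableEq κ]
    [NonUnitalNonAssocSemiring R] (s : Finset ι) (p : ι → R) (f : ι → κ) (W : κ → R) :
    ∑ i ∈ s, p i * W (f i) = ∑ k ∈ s.image f, (∑ i ∈ s with f i = k, p i) * W k := by
  rw [← sum_fiberwise_of_maps_to fun i hi => mem_image_of_mem f hi]
  refine sum_congr rfl fun k _ => ?_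
  rw [sum_mul]
  exact sum_congr rfl fun i hi => by rw [(mem_filter.mp hi).2]

theorem abs_sum_mul_sub_sum_mul_le_dist {S : Type*} [Fintype S] {p : S → ℝ}
    (hp0 : ∀ s, 0 ≤ p s) (hp1 : ∑ s, p s = 1) (U V : S → ℝ) :
    |∑ s, p s * U s - ∑ s, p s * V s| ≤ dist U V := by
  rw [← sum_sub_distrib]
  calc |∑ s, (p s * U s - p s * V s)|
      ≤ ∑ s, |p s * U s - p s * V s| := abs_sum_le_sum_abs _ _
    _ ≤ ∑ s, p s * dist U V := by
        refine sum_le_sum fun s _ => ?_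
        rw [← mul_sub, abs_mul, abs_of_nonneg (hp0 s), ← Real.dist_eq]
        exact mul_le_mul_of_nonneg_left (dist_le_pi_dist U V s) (hp0 s)
    _ = dist U V := by rw [← sum_mul, hp1, one_mul]

section Bellman

variable {S A : Type*} [Fintype S] [Fintype A] [Nonempty A]

noncomputable def bellmanOp (P : S → A → S → ℝ) (γ : ℝ) (r : S → ℝ) (U : S → ℝ) : S → ℝ :=
  fun s => r s + (1 - r s) * γ * univ.sup' univ_nonempty fun a => ∑ s', P s a s' * U s'

theorem lipschitzWith_bellmanOp {P : S → A → S → ℝ} (hP0 : ∀ s a s', 0 ≤ P s a s')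
    (hP1 : ∀ s a, ∑ s', P s a s' = 1) {γ : ℝ} (hγ0 : 0 ≤ γ) {r : S → ℝ}
    (hr0 : ∀ s, 0 ≤ r s) (hr1 : ∀ s, r s ≤ 1) :
    LipschitzWith ⟨γ, hγ0⟩ (bellmanOp P γ r) := by
  refine LipschitzWith.of_dist_le_mul fun U V =>
    (dist_pi_le_iff (by positivity)).mpr fun s => ?_
  have hmax := abs_sup'_sub_sup'_le univ_nonempty fun a _ =>
    abs_sum_mul_sub_sum_mul_le_dist (hP0 s a) (hP1 s a) U V
  have hdisc : |(1 - r s) * γ| ≤ γ := by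
    rw [abs_of_nonneg (mul_nonneg (by linarith [hr1 s]) hγ0)]
    nlinarith [hr0 s]
  rw [Real.dist_eq, bellmanOp, bellmanOp, add_sub_add_left_eq_sub, ← mul_sub, abs_mul]
  exact mul_le_mul hdisc hmax (abs_nonneg _) hγ0

theorem bellmanOp_factorsThrough {Z : Type*} [DecidableEq Z] {f : S → Z}
    {P : S → A → S → ℝ} (hker : ∀ s₁ s₂, f s₁ = f s₂ → ∀ a z,
      ∑ s' ∈ univ.filter (fun s' => f s' = z), P s₁ a s' =
      ∑ s' ∈ univ.filter (fun s' => f s' = z), P s₂ a s')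
    (γ : ℝ) {r : S → ℝ} (hr : r.FactorsThrough f) {U : S → ℝ} (hU : U.FactorsThrough f) :
    (bellmanOp P γ r U).FactorsThrough f := by
  obtain ⟨W, rfl⟩ := (factorsThrough_iff U).mp hU
  intro s₁ s₂ h
  simp only [bellmanOp, hr h, comp_apply]
  congr 2
  refine sup'_congr _ rfl fun a _ => ?_
  rw [sum_mul_comp_eq_sum_image univ _ f W, sum_mul_comp_eq_sum_image univ _ f W]
  exact sum_congr rfl fun z _ => by rw [hker s₁ s₂ h a z]

end Bellman

theorem isClosed_setOf_factorsThrough {S Z : Type*} (f : S → Z) :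
    IsClosed {U : S → ℝ | U.FactorsThrough f} := by
  simp only [FactorsThrough, Set.ofPred_forall]
  exact isClosed_iInter fun s₁ => isClosed_iInter fun s₂ => isClosed_iInter fun _ =>
    isClosed_eq (continuous_apply s₁) (continuous_apply s₂)

theorem stmt4_general {S A : Type*} [Fintype S] [Fintype A] [Nonempty A]
    (P : S → A → S → ℝ)
    (hP0 : ∀ s a s', 0 ≤ P s a s')
    (hP1 : ∀ s a, ∑ s', P s a s' = 1)
    (γ : ℝ) (hγ0 : 0 ≤ γ) (hγ1 : γ < 1)
    (r : S → ℝ) (hr0 : ∀ s, 0 ≤ r s) (hr1 : ∀ s, r s ≤ 1)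
    (T : (S → ℝ) → (S → ℝ))
    (hT : ∀ U s, T U s = r s + (1 - r s) * γ *
      (Finset.univ.sup' Finset.univ_nonempty fun a => ∑ s', P s a s' * U s'))
    (Z : Type*) [DecidableEq Z] (f : S → Z)
    (r₀ : Z → ℝ)
    (hrf : ∀ s, r s = r₀ (f s))
    (hker : ∀ s₁ s₂, f s₁ = f s₂ → ∀ a z,
      ∑ s' ∈ Finset.univ.filter (fun s' => f s' = z), P s₁ a s' =
      ∑ s' ∈ Finset.univ.filter (fun s' => f s' = z), P s₂ a s')
    (Vstar : S → ℝ) (hfix : T Vstar = Vstar) :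
    (∀ s₁ s₂, f s₁ = f s₂ → Vstar s₁ = Vstar s₂) ∧
      ∃ W : Z → ℝ, Vstar = W ∘ f := by
  obtain rfl : T = bellmanOp P γ r := funext fun U => funext (hT U)
  have hcontr : ContractingWith ⟨γ, hγ0⟩ (bellmanOp P γ r) :=
    ⟨hγ1, lipschitzWith_bellmanOp hP0 hP1 hγ0 hr0 hr1⟩
  have hr : r.FactorsThrough f := fun s₁ s₂ h => by rw [hrf, hrf, h]
  have hV : Vstar.FactorsThrough f :=
    hcontr.mem_of_isFixedPt (isClosed_setOf_factorsThrough f)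
      (fun U hU => bellmanOp_factorsThrough hker γ hr hU)
      (show (0 : S → ℝ).FactorsThrough f from fun _ _ _ => rfl) hfix
  exact ⟨hV, extend f Vstar 0, (hV.extend_comp (0 : Z → ℝ)).symm⟩

/-- Endogenous Bellman closure, finite-state version: if the reward factors
through a latent abstraction `f` and the pushforward of the transition kernel
along `f` depends only on the latent state and the action, then the unique
fixed point of the absorbing-goal Bellman optimality operator factors through
`f`. -/
theorem stmt4 {S A : Type*} [Fintype S] [Nonempty S] [Fintype A] [Nonempty A]
    (P : S → A → S → ℝ)
    (hP0 : ∀ s a s', 0 ≤ P s a s')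
    (hP1 : ∀ s a, ∑ s', P s a s' = 1)
    (γ : ℝ) (hγ0 : 0 ≤ γ) (hγ1 : γ < 1)
    (r : S → ℝ) (hr0 : ∀ s, 0 ≤ r s) (hr1 : ∀ s, r s ≤ 1)
    (T : (S → ℝ) → (S → ℝ))
    (hT : ∀ U s, T U s = r s + (1 - r s) * γ *
      (Finset.univ.sup' Finset.univ_nonempty fun a => ∑ s', P s a s' * U s'))
    (Z : Type*) [Fintype Z] [DecidableEq Z] (f : S → Z)
    (r₀ : Z → ℝ) (hr₀0 : ∀ z, 0 ≤ r₀ z) (hr₀1 : ∀ z, r₀ z ≤ 1)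
    (hrf : ∀ s, r s = r₀ (f s))
    (hker : ∀ s₁ s₂, f s₁ = f s₂ → ∀ a z,
      ∑ s' ∈ Finset.univ.filter (fun s' => f s' = z), P s₁ a s' =
      ∑ s' ∈ Finset.univ.filter (fun s' => f s' = z), P s₂ a s')
    (Vstar : S → ℝ) (hfix : T Vstar = Vstar)
    (huniq : ∀ U : S → ℝ, T U = U → U = Vstar) :
    (∀ s₁ s₂, f s₁ = f s₂ → Vstar s₁ = Vstar s₂) ∧
      ∃ W : Z → ℝ, Vstar = W ∘ f :=
  stmt4_general P hP0 hP1 γ hγ0 hγ1 r hr0 hr1 T hT Z f r₀ hrf hker Vstar hfix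
end

section
/- (Sufficiency of the temporal distance difference field for optimal goal-reaching, finite version.) There exists a map π̃ : S → (S → ℝ) → A such that for every goal g ∈ S, the policy π_g defined by π_g s = π̃ s (α(s,g)) satisfies T_{π_g, g} (V(·, g)) = V(·, g); consequently, since T_{π_g, g} is a γ-contraction in the supremum norm, V(·, g) is its unique fixed point, i.e., the action chosen from (s, α(s,g)) alone recovers a policy whose value function equals the optimal value V(·, g). -/
/-!
Knowing `s`, the field `α(s,g)` determines `V(·,g)`: since `d = log_γ V`, one has
`V x g = γ ^ α(s,g)(x) * V x s`. So `π̃ s α` can rebuild `V(·,g)` and act greedily with respect to it,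
which makes `V(·,g)` a fixed point of the evaluation operator of the induced policy; that operator is a
`γ`-contraction in the sup norm, so the fixed point is unique.
-/

open Finset

section PolicyEvaluation

variable {S A : Type*} [Fintype S]

def policyEval (P : S → A → S → ℝ) (γ : ℝ) (r : S → ℝ) (π : S → A) (U : S → ℝ) : S → ℝ :=
  fun s => r s + (1 - r s) * γ * ∑ s', P s (π s) s' * U s'

lemma abs_sum_mul_le_norm {p : S → ℝ} (hp0 : ∀ x, 0 ≤ p x) (hp1 : ∑ x, p x = 1) (U : S → ℝ) :
    |∑ x, p x * U x| ≤ ‖U‖ :=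
  calc |∑ x, p x * U x| ≤ ∑ x, p x * ‖U‖ := by
        refine (abs_sum_le_sum_abs _ _).trans (sum_le_sum fun x _ => ?_)
        rw [abs_mul, abs_of_nonneg (hp0 x)]
        exact mul_le_mul_of_nonneg_left (norm_le_pi_norm U x) (hp0 x)
    _ = ‖U‖ := by rw [← sum_mul, hp1, one_mul]

variable {P : S → A → S → ℝ} {γ : ℝ} {r : S → ℝ}

lemma dist_policyEval_le (hP0 : ∀ s a s', 0 ≤ P s a s') (hP1 : ∀ s a, ∑ s', P s a s' = 1)
    (hγ0 : 0 < γ) (hr0 : ∀ s, 0 ≤ r s) (hr1 : ∀ s, r s ≤ 1) (π : S → A) (U W : S → ℝ) :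
    dist (policyEval P γ r π U) (policyEval P γ r π W) ≤ γ * dist U W := by
  rw [dist_eq_norm, dist_eq_norm]
  refine pi_norm_le_iff_of_nonneg (by positivity) |>.mpr fun s => ?_
  have hdiff : (policyEval P γ r π U - policyEval P γ r π W) s
      = (1 - r s) * γ * ∑ s', P s (π s) s' * (U - W) s' := by
    simp only [policyEval, Pi.sub_apply, mul_sub, sum_sub_distrib]
    ring
  have hc0 : 0 ≤ (1 - r s) * γ := mul_nonneg (by linarith [hr1 s]) hγ0.le
  rw [Real.norm_eq_abs, hdiff, abs_mul, abs_of_nonneg hc0]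
  calc (1 - r s) * γ * |∑ s', P s (π s) s' * (U - W) s'| ≤ (1 - r s) * γ * ‖U - W‖ :=
        mul_le_mul_of_nonneg_left (abs_sum_mul_le_norm (hP0 s (π s)) (hP1 s (π s)) _) hc0
    _ ≤ γ * ‖U - W‖ :=
        mul_le_mul_of_nonneg_right (by nlinarith [hr0 s]) (norm_nonneg _)

lemma policyEval_fixedPoint_unique (hP0 : ∀ s a s', 0 ≤ P s a s')
    (hP1 : ∀ s a, ∑ s', P s a s' = 1) (hγ0 : 0 < γ) (hγ1 : γ < 1) (hr0 : ∀ s, 0 ≤ r s)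
    (hr1 : ∀ s, r s ≤ 1) {π : S → A} {U W : S → ℝ} (hU : policyEval P γ r π U = U)
    (hW : policyEval P γ r π W = W) : U = W := by
  have h := dist_policyEval_le hP0 hP1 hγ0 hr0 hr1 π U W
  rw [hU, hW] at h
  exact dist_le_zero.mp (by nlinarith [dist_nonneg (x := U) (y := W)])

end PolicyEvaluation

section Greedy

variable {S A : Type*} [Fintype S] [Fintype A] [Nonempty A]

noncomputable def greedyAction (P : S → A → S → ℝ) (s : S) (U : S → ℝ) : A :=
  Classical.choose (exists_mem_eq_sup' univ_nonempty fun a => ∑ s', P s a s' * U s')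

lemma sup'_eq_sum_greedyAction (P : S → A → S → ℝ) (s : S) (U : S → ℝ) :
    univ.sup' univ_nonempty (fun a => ∑ s', P s a s' * U s')
      = ∑ s', P s (greedyAction P s U) s' * U s' :=
  (Classical.choose_spec (exists_mem_eq_sup' univ_nonempty fun a => ∑ s', P s a s' * U s')).2

end Greedy

lemma rpow_logb_sub_logb_mul {γ a b : ℝ} (hγ0 : 0 < γ) (hγ1 : γ ≠ 1) (ha : 0 < a) (hb : 0 < b) :
    γ ^ (Real.logb γ a - Real.logb γ b) * b = a := by
  rw [Real.rpow_sub hγ0, Real.rpow_logb hγ0 hγ1 ha, Real.rpow_logb hγ0 hγ1 hb,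
    div_mul_cancel₀ _ hb.ne']

theorem stmt6_general {S A : Type*} [Fintype S] [Fintype A] [Nonempty A]
    (P : S → A → S → ℝ)
    (hP0 : ∀ s a s', 0 ≤ P s a s')
    (hP1 : ∀ s a, ∑ s', P s a s' = 1)
    (γ : ℝ) (hγ0 : 0 < γ) (hγ1 : γ < 1)
    (r : S → S → ℝ) (hr0 : ∀ g s, 0 ≤ r g s) (hr1 : ∀ g s, r g s ≤ 1)
    (V : S → S → ℝ) (hVpos : ∀ x y, 0 < V x y)
    (hVfix : ∀ g s, V s g = r g s + (1 - r g s) * γ *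
      (Finset.univ.sup' Finset.univ_nonempty fun a => ∑ s', P s a s' * V s' g)) :
    ∃ πt : S → (S → ℝ) → A, ∀ g : S,
      (∀ s, r g s + (1 - r g s) * γ *
          ∑ s', P s (πt s fun x => Real.logb γ (V x g) - Real.logb γ (V x s)) s'
            * V s' g
        = V s g) ∧
      ∀ U : S → ℝ,
        (∀ s, U s = r g s + (1 - r g s) * γ *
          ∑ s', P s (πt s fun x => Real.logb γ (V x g) - Real.logb γ (V x s)) s'
            * U s') →
        U = fun s => V s g := by
  refine ⟨fun s α => greedyAction P s fun x => γ ^ α x * V x s, fun g => ?_⟩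
  have hrecover : ∀ s, (fun x => γ ^ (Real.logb γ (V x g) - Real.logb γ (V x s)) * V x s)
      = fun x => V x g := fun s =>
    funext fun x => rpow_logb_sub_logb_mul hγ0 hγ1.ne (hVpos x g) (hVpos x s)
  simp only [hrecover]
  have hfix : ∀ s, r g s + (1 - r g s) * γ * ∑ s', P s (greedyAction P s fun x => V x g) s' * V s' g
      = V s g := fun s => by rw [hVfix g s, sup'_eq_sum_greedyAction]
  refine ⟨hfix, fun U hU => ?_⟩
  exact policyEval_fixedPoint_unique (π := fun s => greedyAction P s fun x => V x g) hP0 hP1 hγ0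
    hγ1 (hr0 g) (hr1 g) (funext fun s => (hU s).symm) (funext hfix)

/-- Sufficiency of the temporal distance difference field for optimal
goal-reaching, finite version: there is a map `π̃` choosing an action from a
state and the field `α(s,g) = fun x => log_γ (V x g) − log_γ (V x s)` alone,
such that for every goal `g` the induced policy's evaluation operator fixes
`V(·,g)`, and `V(·,g)` is its unique fixed point. -/
theorem stmt6 {S A : Type*} [Fintype S] [Nonempty S] [Fintype A] [Nonempty A]
    (P : S → A → S → ℝ)
    (hP0 : ∀ s a s', 0 ≤ P s a s')
    (hP1 : ∀ s a, ∑ s', P s a s' = 1)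
    (γ : ℝ) (hγ0 : 0 < γ) (hγ1 : γ < 1)
    (r : S → S → ℝ) (hr0 : ∀ g s, 0 ≤ r g s) (hr1 : ∀ g s, r g s ≤ 1)
    (V : S → S → ℝ) (hVpos : ∀ x y, 0 < V x y)
    (hVfix : ∀ g s, V s g = r g s + (1 - r g s) * γ *
      (Finset.univ.sup' Finset.univ_nonempty fun a => ∑ s', P s a s' * V s' g)) :
    ∃ πt : S → (S → ℝ) → A, ∀ g : S,
      (∀ s, r g s + (1 - r g s) * γ *
          ∑ s', P s (πt s fun x => Real.logb γ (V x g) - Real.logb γ (V x s)) s'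
            * V s' g
        = V s g) ∧
      ∀ U : S → ℝ,
        (∀ s, U s = r g s + (1 - r g s) * γ *
          ∑ s', P s (πt s fun x => Real.logb γ (V x g) - Real.logb γ (V x s)) s'
            * U s') →
        U = fun s => V s g :=
  stmt6_general P hP0 hP1 γ hγ0 hγ1 r hr0 hr1 V hVpos hVfix
end

section
/- (The temporal distance difference field is a task-endogenous analogy, finite version.) Assume additionally that there are a type Z, a code map e : S → S → Z, and D : Z → Z → ℝ with d x y = D (e x y) (e y x) for all x, y ∈ S. Then: (i) for any two pairs (s, g) and (s', g') with e s g = e s' g', e g s = e g' s', and satisfying, for every x ∈ S, e x s = e x g = e x s' = e x g', e s x = e s g, e g x = e g s, e s' x = e s' g', and e g' x = e g' s', the fields coincide: d x g − d x s = d x g' − d x s' for all x ∈ S (the field encodes only the task-endogenous displacement); and (ii) there exists π̃ : S → (S → ℝ) → A such that for every goal g ∈ S, the policy π_g with π_g s = π̃ s (α(s,g)) satisfies T_{π_g, g} (V(·, g)) = V(·, g), so V(·, g) is the unique fixed point of T_{π_g, g} (the field is sufficient for optimal goal-reaching). -/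
/-!
Part (i) is bookkeeping: under the hypotheses on the codes, `d x g` and `d x g'` (and likewise
`d x s` and `d x s'`) are `D` applied to the same pair of codes.

For part (ii), `V x g = V x s * γ ^ α(s,g)(x)`, so at the state `s` the Q-values of `V(·, g)` can
be computed from `V(·, s)` and the field `α(s,g)` alone; acting greedily on them therefore attains
the maximum in the Bellman optimality equation, and `V(·, g)` is a fixed point of the policy
evaluation operator. That operator is a `γ`-contraction in the sup norm, so the fixed point is
unique.
-/

open Finset

lemma mul_rpow_logb_sub_logb {b x y : ℝ} (hb : 0 < b) (hb1 : b ≠ 1) (hx : 0 < x) (hy : 0 < y) :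
    y * b ^ (Real.logb b x - Real.logb b y) = x := by
  rw [Real.rpow_sub hb, Real.rpow_logb hb hb1 hx, Real.rpow_logb hb hb1 hy]
  field_simp

noncomputable def argmaxOf {A : Type*} [Fintype A] [Nonempty A] (f : A → ℝ) : A :=
  (univ.exists_mem_eq_sup' univ_nonempty f).choose

lemma apply_argmaxOf {A : Type*} [Fintype A] [Nonempty A] (f : A → ℝ) :
    f (argmaxOf f) = univ.sup' univ_nonempty f :=
  (univ.exists_mem_eq_sup' univ_nonempty f).choose_spec.2.symm

section Contraction

variable {S : Type*} [Fintype S]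

lemma abs_sum_mul_sub_sum_mul_le_dist_s7 {Q : S → ℝ} (hQ0 : ∀ s, 0 ≤ Q s) (hQ1 : ∑ s, Q s = 1)
    (U W : S → ℝ) : |∑ s, Q s * U s - ∑ s, Q s * W s| ≤ dist U W :=
  calc |∑ s, Q s * U s - ∑ s, Q s * W s|
      = |∑ s, Q s * (U s - W s)| := by simp only [← sum_sub_distrib, mul_sub]
    _ ≤ ∑ s, |Q s * (U s - W s)| := abs_sum_le_sum_abs _ _
    _ ≤ ∑ s, Q s * dist U W := by
        gcongr with s
        rw [abs_mul, abs_of_nonneg (hQ0 s), ← Real.dist_eq]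
        exact mul_le_mul_of_nonneg_left (dist_le_pi_dist U W s) (hQ0 s)
    _ = dist U W := by rw [← sum_mul, hQ1, one_mul]

lemma eq_of_fixed_affine_stochastic {Q : S → S → ℝ} (hQ0 : ∀ s s', 0 ≤ Q s s')
    (hQ1 : ∀ s, ∑ s', Q s s' = 1) {b c : S → ℝ} {k : ℝ} (hk0 : 0 ≤ k) (hk1 : k < 1)
    (hc0 : ∀ s, 0 ≤ c s) (hck : ∀ s, c s ≤ k) {U W : S → ℝ}
    (hU : ∀ s, U s = b s + c s * ∑ s', Q s s' * U s')
    (hW : ∀ s, W s = b s + c s * ∑ s', Q s s' * W s') : U = W := by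
  have hcontract : dist U W ≤ k * dist U W := by
    refine (dist_pi_le_iff (mul_nonneg hk0 dist_nonneg)).2 fun s => ?_
    calc dist (U s) (W s)
        = c s * |∑ s', Q s s' * U s' - ∑ s', Q s s' * W s'| := by
          rw [Real.dist_eq, hU s, hW s, add_sub_add_left_eq_sub, ← mul_sub, abs_mul,
            abs_of_nonneg (hc0 s)]
      _ ≤ k * dist U W :=
          mul_le_mul (hck s) (abs_sum_mul_sub_sum_mul_le_dist_s7 (hQ0 s) (hQ1 s) U W)
            (abs_nonneg _) hk0
  exact dist_le_zero.1 (by nlinarith [dist_nonneg (x := U) (y := W)])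

end Contraction

section GreedyPolicy

variable {S A : Type*} [Fintype S] [Fintype A] [Nonempty A]

noncomputable def fieldGreedyPolicy (P : S → A → S → ℝ) (γ : ℝ) (V : S → S → ℝ) :
    S → (S → ℝ) → A :=
  fun s α => argmaxOf fun a => ∑ s', P s a s' * (V s' s * γ ^ α s')

lemma sum_fieldGreedyPolicy_eq_sup' (P : S → A → S → ℝ) {γ : ℝ} (hγ0 : 0 < γ) (hγ1 : γ ≠ 1)
    {V : S → S → ℝ} (hVpos : ∀ x y, 0 < V x y) (s g : S) :
    ∑ s', P s (fieldGreedyPolicy P γ V s fun x => Real.logb γ (V x g) - Real.logb γ (V x s)) s'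
        * V s' g
      = (univ : Finset A).sup' univ_nonempty fun a => ∑ s', P s a s' * V s' g := by
  rw [fieldGreedyPolicy]
  simp only [mul_rpow_logb_sub_logb hγ0 hγ1 (hVpos _ g) (hVpos _ s)]
  exact apply_argmaxOf fun a => ∑ s', P s a s' * V s' g

end GreedyPolicy

theorem stmt7_general {S A : Type*} [Fintype S] [Fintype A] [Nonempty A]
    (P : S → A → S → ℝ)
    (hP0 : ∀ s a s', 0 ≤ P s a s')
    (hP1 : ∀ s a, ∑ s', P s a s' = 1)
    (γ : ℝ) (hγ0 : 0 < γ) (hγ1 : γ < 1)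
    (r : S → S → ℝ) (hr0 : ∀ g s, 0 ≤ r g s) (hr1 : ∀ g s, r g s ≤ 1)
    (V : S → S → ℝ) (hVpos : ∀ x y, 0 < V x y)
    (hVfix : ∀ g s, V s g = r g s + (1 - r g s) * γ *
      (Finset.univ.sup' Finset.univ_nonempty fun a => ∑ s', P s a s' * V s' g))
    (Z : Type*) (e : S → S → Z) (D : Z → Z → ℝ)
    (hfact : ∀ x y, Real.logb γ (V x y) = D (e x y) (e y x)) :
    ((∀ s g s' g' : S,
        e s g = e s' g' → e g s = e g' s' →
        (∀ x, e x s = e x g) → (∀ x, e x s = e x s') → (∀ x, e x s = e x g') →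
        (∀ x, e s x = e s g) → (∀ x, e g x = e g s) →
        (∀ x, e s' x = e s' g') → (∀ x, e g' x = e g' s') →
        ∀ x, Real.logb γ (V x g) - Real.logb γ (V x s) =
          Real.logb γ (V x g') - Real.logb γ (V x s')) ∧
      ∃ πt : S → (S → ℝ) → A, ∀ g : S,
        (∀ s, r g s + (1 - r g s) * γ *
            ∑ s', P s (πt s fun x => Real.logb γ (V x g) - Real.logb γ (V x s)) s'
              * V s' g
          = V s g) ∧
        ∀ U : S → ℝ,
          (∀ s, U s = r g s + (1 - r g s) * γ *
            ∑ s', P s (πt s fun x => Real.logb γ (V x g) - Real.logb γ (V x s)) s'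
              * U s') →
          U = fun s => V s g) := by
  refine ⟨fun s g s' g' hsg hgs hxg hxs' hxg' hsx hgx hs'x hg'x x => ?_,
    fieldGreedyPolicy P γ V, fun g => ?_⟩
  · have hg : Real.logb γ (V x g) = Real.logb γ (V x g') := by
      rw [hfact, hfact, ← hxg, hxg', hgx, hgs, ← hg'x]
    have hs : Real.logb γ (V x s) = Real.logb γ (V x s') := by
      rw [hfact, hfact, hxs', hsx, hsg, ← hs'x]
    rw [hg, hs]
  · have hfix : ∀ s, r g s + (1 - r g s) * γ *
        ∑ s', P s (fieldGreedyPolicy P γ V s fun x =>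
          Real.logb γ (V x g) - Real.logb γ (V x s)) s' * V s' g = V s g := fun s => by
      rw [sum_fieldGreedyPolicy_eq_sup' P hγ0 hγ1.ne hVpos, ← hVfix]
    refine ⟨hfix, fun U hU => eq_of_fixed_affine_stochastic (fun s => hP0 s _) (fun s => hP1 s _)
      hγ0.le hγ1 (fun s => mul_nonneg (sub_nonneg.2 (hr1 g s)) hγ0.le)
      (fun s => mul_le_of_le_one_left hγ0.le (by linarith [hr0 g s])) hU
      fun s => (hfix s).symm⟩

/-- The temporal distance difference field is a task-endogenous analogy, finite
version: (i) it encodes only the task-endogenous displacement, and (ii) it is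
sufficient for optimal goal-reaching. -/
theorem stmt7 {S A : Type*} [Fintype S] [Nonempty S] [Fintype A] [Nonempty A]
    (P : S → A → S → ℝ)
    (hP0 : ∀ s a s', 0 ≤ P s a s')
    (hP1 : ∀ s a, ∑ s', P s a s' = 1)
    (γ : ℝ) (hγ0 : 0 < γ) (hγ1 : γ < 1)
    (r : S → S → ℝ) (hr0 : ∀ g s, 0 ≤ r g s) (hr1 : ∀ g s, r g s ≤ 1)
    (V : S → S → ℝ) (hVpos : ∀ x y, 0 < V x y)
    (hVfix : ∀ g s, V s g = r g s + (1 - r g s) * γ *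
      (Finset.univ.sup' Finset.univ_nonempty fun a => ∑ s', P s a s' * V s' g))
    (Z : Type*) (e : S → S → Z) (D : Z → Z → ℝ)
    (hfact : ∀ x y, Real.logb γ (V x y) = D (e x y) (e y x)) :
    ((∀ s g s' g' : S,
        e s g = e s' g' → e g s = e g' s' →
        (∀ x, e x s = e x g) → (∀ x, e x s = e x s') → (∀ x, e x s = e x g') →
        (∀ x, e s x = e s g) → (∀ x, e g x = e g s) →
        (∀ x, e s' x = e s' g') → (∀ x, e g' x = e g' s') →
        ∀ x, Real.logb γ (V x g) - Real.logb γ (V x s) =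
          Real.logb γ (V x g') - Real.logb γ (V x s')) ∧
      ∃ πt : S → (S → ℝ) → A, ∀ g : S,
        (∀ s, r g s + (1 - r g s) * γ *
            ∑ s', P s (πt s fun x => Real.logb γ (V x g) - Real.logb γ (V x s)) s'
              * V s' g
          = V s g) ∧
        ∀ U : S → ℝ,
          (∀ s, U s = r g s + (1 - r g s) * γ *
            ∑ s', P s (πt s fun x => Real.logb γ (V x g) - Real.logb γ (V x s)) s'
              * U s') →
          U = fun s => V s g) :=
  stmt7_general P hP0 hP1 γ hγ0 hγ1 r hr0 hr1 V hVpos hVfix Z e D hfact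
end
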